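/- A zero z₀ of f(z) = r(z) - conj(z) with |r'(z₀)| ≤ 1 is an attracting or rationally neutral fixed point of R = conj(r) ∘ r, i.e., R(z₀) = z₀ and |R'(z₀)| ≤ 1. -/

import Mathlib

open ComplexConjugate

theorem HasDerivAt.conj_comp_conj_comp_of_apply_eq_conj {𝕜 : Type*} [RCLike 𝕜] {f : 𝕜 → 𝕜}
    {f' x : 𝕜} (hf : HasDerivAt f f' x) (hx : f x = conj x) :
    HasDerivAt (fun z => conj (f (conj (f z)))) (conj f' * f') x := by
  have hconj : HasDerivAt (conj ∘ f ∘ conj) (conj f') (f x) := hx ▸ hf.conj_conj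
  exact hconj.comp x hf

/-- A zero `z₀` of `f(z) = r(z) - conj z` with `|r'(z₀)| ≤ 1` is an attracting or
rationally neutral fixed point of `R = conj(r) ∘ r`: `R z₀ = z₀` and `|R'(z₀)| ≤ 1`. -/
theorem nonSensePreserving_zero_attracting (r : ℂ → ℂ) (z₀ d : ℂ)
    (hzero : r z₀ - (starRingEnd ℂ) z₀ = 0)
    (hd : HasDerivAt r d z₀) (hd1 : ‖d‖ ≤ 1) :
    (starRingEnd ℂ) (r ((starRingEnd ℂ) (r z₀))) = z₀ ∧
      ∃ D : ℂ, HasDerivAt (fun z => (starRingEnd ℂ) (r ((starRingEnd ℂ) (r z)))) D z₀ ∧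
        ‖D‖ ≤ 1 := by
  have hfix : r z₀ = conj z₀ := sub_eq_zero.mp hzero
  refine ⟨by simp [hfix], _, hd.conj_comp_conj_comp_of_apply_eq_conj hfix, ?_⟩
  calc ‖conj d * d‖ = ‖d‖ * ‖d‖ := by rw [norm_mul, Complex.norm_conj]
    _ ≤ 1 := mul_le_one₀ hd1 (norm_nonneg d) hd1
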